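/- Let V be a quasi-projective surface over an algebraically closed field of characteristic zero, and let μ = (1^{α₁}, 2^{α₂}, …, s^{α_s}) be a partition of n. Then the morphism Chow^{α₁}(V) × ⋯ × Chow^{α_s}(V) → Chowⁿ(V) given by (z₁,…,z_s) ↦ z₁ + 2z₂ + ⋯ + s·z_s is the normalization of the closure of the stratum Chowⁿ_μ(V). -/

import Mathlib

/-!
Write `τ` for the pullback `k[V^n] → k[V^ι]` along `e` and `ρ` for the pullback along a section
of `e`, so that `τ ∘ ρ = id`. A block permutation `θ` of `ι` lifts along `e` to a permutation of
`Fin n`, so `τ` maps `𝔖ₙ`-invariants to block invariants; conversely, a permutation `σ` of `Fin n`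
that sends no two points of different fibres of `e` into one fibre descends along `e` to a block
permutation.

Every `x = τ (ρ x)` is integral over the image of the `𝔖ₙ`-invariants because `ρ x` is a root of
its `𝔖ₙ`-orbit polynomial.
The kernel statement holds because configurations with distinct points are Zariski dense.
For birationality let `D = ∏_{e j ≠ e j'} (x_j - x_j')`: `τ (σ • D)` vanishes unless `σ` descends,
in which case `τ (σ • D) = τ D` and `τ (σ • ρ x) = x` for block-invariant `x`. Hence
`x = τ (∑ σ • (ρ x * D)) / τ (∑ σ • D)`, and the denominator is `N • τ D` with `N ≥ 1`, nonzero in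
characteristic zero. Finally a fixed subalgebra of a domain is closed under exact division, which
makes it integrally closed inside the normal ring `k[V^ι]`.
-/

open MvPolynomial

/-- `𝔖ₙ`-invariants of `k[x_{j,l}]`: the coordinate ring of `Chowⁿ(𝔸^d)`. -/
noncomputable def chowInvariants (k : Type*) [CommRing k] (n d : ℕ) :
    Subalgebra k (MvPolynomial (Fin n × Fin d) k) where
  carrier := {p | ∀ σ : Equiv.Perm (Fin n), rename (fun q => (σ q.1, q.2)) p = p}
  mul_mem' {a b} ha hb := fun σ => by rw [map_mul, ha σ, hb σ]
  add_mem' {a b} ha hb := fun σ => by rw [map_add, ha σ, hb σ]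
  one_mem' := fun σ => by rw [map_one]
  zero_mem' := fun σ => by rw [map_zero]
  algebraMap_mem' r := fun σ => by simp [MvPolynomial.algebraMap_eq, rename_C]

/-- Invariants of the block permutation group: the coordinate ring of
`Chow^{α₁}(𝔸^d) × ⋯ × Chow^{α_s}(𝔸^d)`. -/
noncomputable def blockChowInvariants (k : Type*) [CommRing k] (s : ℕ) (α : Fin s → ℕ)
    (d : ℕ) : Subalgebra k (MvPolynomial ((Σ i : Fin s, Fin (α i)) × Fin d) k) where
  carrier := {p | ∀ σ : Equiv.Perm (Σ i : Fin s, Fin (α i)),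
    (∀ j, (σ j).1 = j.1) → rename (fun q => (σ q.1, q.2)) p = p}
  mul_mem' {a b} ha hb := fun σ hσ => by rw [map_mul, ha σ hσ, hb σ hσ]
  add_mem' {a b} ha hb := fun σ hσ => by rw [map_add, ha σ hσ, hb σ hσ]
  one_mem' := fun σ _ => by rw [map_one]
  zero_mem' := fun σ _ => by rw [map_zero]
  algebraMap_mem' r := fun σ _ => by simp [MvPolynomial.algebraMap_eq, rename_C]

universe u

open Finset

section Fibers

variable {β ι : Type*} [Fintype β] [DecidableEq ι]

lemma card_filter_comp_perm (σ : Equiv.Perm β) (P : β → Prop) [DecidablePred P] :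
    #{b | P (σ b)} = #{b | P b} := by
  simpa only [Fintype.card_subtype] using
    Fintype.card_congr (σ.subtypeEquiv (p := fun b => P (σ b)) (q := P) fun _ => Iff.rfl)

lemma exists_perm_comp_eq_of_card_fiber_eq (f g : β → ι)
    (h : ∀ c, #{b | f b = c} = #{b | g b = c}) :
    ∃ π : Equiv.Perm β, ∀ b, g (π b) = f b := by
  have hfib : ∀ c, {b // f b = c} ≃ {b // g b = c} := fun c =>
    Fintype.equivOfCardEq (by simpa only [Fintype.card_subtype] using h c)
  exact ⟨(Equiv.sigmaFiberEquiv f).symm.trans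
    ((Equiv.sigmaCongrRight hfib).trans (Equiv.sigmaFiberEquiv g)),
    fun b => (hfib (f b) ⟨b, rfl⟩).2⟩

variable {e : β → ι} {m : ι → ℕ}

lemma exists_perm_lift (he : ∀ p, #{j | e j = p} = m p) (θ : Equiv.Perm ι)
    (hθ : ∀ p, m (θ p) = m p) : ∃ π : Equiv.Perm β, ∀ j, e (π j) = θ (e j) := by
  refine exists_perm_comp_eq_of_card_fiber_eq _ _ fun c => ?_
  simp only [← θ.eq_symm_apply, he, ← hθ (θ.symm c), θ.apply_symm_apply]

lemma surjective_of_card_fiber_pos (he : ∀ p, #{j | e j = p} = m p) (hm : ∀ p, 0 < m p) :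
    e.Surjective := fun p => by
  obtain ⟨j, hj⟩ := card_pos.mp ((he p).symm ▸ hm p)
  exact ⟨j, (mem_filter.mp hj).2⟩

lemma exists_perm_descend [Fintype ι] (he : ∀ p, #{j | e j = p} = m p) (hm : ∀ p, 0 < m p)
    (σ : Equiv.Perm β) (hσ : ∀ j j', e (σ j) = e (σ j') → e j = e j') :
    ∃ θ : Equiv.Perm ι, (∀ p, m (θ p) = m p) ∧ ∀ j, e (σ j) = θ (e j) := by
  have he_surj := surjective_of_card_fiber_pos he hm
  -- `ψ ∘ e ∘ σ = e`; it is surjective, hence a permutation, and `θ = ψ⁻¹`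
  set ψ := Function.extend (e ∘ σ) e id
  have hψ : ∀ j, ψ (e (σ j)) = e j := fun j => Function.FactorsThrough.extend_apply hσ _ j
  have hψ_bij : Function.Bijective ψ := Finite.surjective_iff_bijective.mp fun p => by
    obtain ⟨j, rfl⟩ := he_surj p; exact ⟨_, hψ j⟩
  have hmψ : ∀ p, m (ψ p) = m p := fun p => by
    rw [← he, ← he, ← card_filter_comp_perm σ (e · = p)]
    congr 1; ext j
    simp only [mem_filter, mem_univ, true_and]
    rw [← hψ j, hψ_bij.1.eq_iff]
  refine ⟨(Equiv.ofBijective ψ hψ_bij).symm, fun p => ?_, fun j => ?_⟩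
  · conv_rhs => rw [← (Equiv.ofBijective ψ hψ_bij).apply_symm_apply p]
    exact (hmψ _).symm
  · rw [Equiv.eq_symm_apply]; exact hψ j

end Fibers

section RenamePoints

variable {k : Type*} [CommRing k] {d : ℕ}

noncomputable def renamePoints {β γ : Type*} (f : β → γ) :
    MvPolynomial (β × Fin d) k →ₐ[k] MvPolynomial (γ × Fin d) k :=
  rename (Prod.map f id)

lemma renamePoints_renamePoints {β γ δ : Type*} (f : β → γ) (g : γ → δ)
    (p : MvPolynomial (β × Fin d) k) :
    renamePoints g (renamePoints f p) = renamePoints (g ∘ f) p :=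
  rename_rename _ _ p

lemma renamePoints_id {β : Type*} (p : MvPolynomial (β × Fin d) k) :
    renamePoints id p = p :=
  rename_id_apply p

noncomputable instance renamePoints.mulSemiringAction (β : Type*) :
    MulSemiringAction (Equiv.Perm β) (MvPolynomial (β × Fin d) k) where
  smul σ := renamePoints σ
  one_smul := renamePoints_id
  mul_smul σ π p := (renamePoints_renamePoints π σ p).symm
  smul_zero _ := map_zero _
  smul_add _ := map_add _
  smul_one _ := map_one _
  smul_mul _ := map_mul _

lemma perm_smul_eq_renamePoints {β : Type*} (σ : Equiv.Perm β) (p : MvPolynomial (β × Fin d) k) :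
    σ • p = renamePoints σ p := rfl

lemma renamePoints_smul_of_comp_eq {β ι : Type*} {e : β → ι} {π : Equiv.Perm β} {θ : Equiv.Perm ι}
    (h : ∀ j, e (π j) = θ (e j)) (p : MvPolynomial (β × Fin d) k) :
    renamePoints e (π • p) = θ • renamePoints e p := by
  rw [perm_smul_eq_renamePoints, perm_smul_eq_renamePoints, renamePoints_renamePoints,
    renamePoints_renamePoints]
  exact congrArg (renamePoints · p) (funext h)

end RenamePoints

section ChowInvariants

variable {k : Type*} [CommRing k] {n d : ℕ}

lemma mem_chowInvariants_iff {p : MvPolynomial (Fin n × Fin d) k} :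
    p ∈ chowInvariants k n d ↔ ∀ σ : Equiv.Perm (Fin n), σ • p = p :=
  Iff.rfl

instance : SMulCommClass (Equiv.Perm (Fin n)) (chowInvariants k n d)
    (MvPolynomial (Fin n × Fin d) k) where
  smul_comm σ a p := by
    rw [Subalgebra.smul_def, Subalgebra.smul_def, smul_eq_mul, smul_eq_mul, smul_mul',
      mem_chowInvariants_iff.mp a.2]

instance : Algebra.IsInvariant (chowInvariants k n d) (MvPolynomial (Fin n × Fin d) k)
    (Equiv.Perm (Fin n)) where
  isInvariant p hp := ⟨⟨p, mem_chowInvariants_iff.mpr hp⟩, rfl⟩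

lemma sum_smul_mem_chowInvariants (p : MvPolynomial (Fin n × Fin d) k) :
    ∑ σ : Equiv.Perm (Fin n), σ • p ∈ chowInvariants k n d :=
  mem_chowInvariants_iff.mpr fun π => by
    rw [Finset.smul_sum]
    exact Fintype.sum_equiv (Equiv.mulLeft π) _ _ fun σ => (mul_smul π σ p).symm

instance : Algebra.IsIntegral (chowInvariants k n d) (MvPolynomial (Fin n × Fin d) k) :=
  Algebra.IsInvariant.isIntegral _ _ (Equiv.Perm (Fin n))

end ChowInvariants

section CrossFiberDiscr

variable {k : Type*} [CommRing k] {d : ℕ} {β ι : Type*} [Fintype β] [DecidableEq ι]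

noncomputable def crossFiberDiscr (f : β → ι) (i₀ : Fin d) : MvPolynomial (β × Fin d) k :=
  ∏ jj ∈ ({jj | f jj.1 ≠ f jj.2} : Finset (β × β)), (X (jj.1, i₀) - X (jj.2, i₀))

variable {f : β → ι} {i₀ : Fin d}

lemma eval_crossFiberDiscr_eq_zero {w : β × Fin d → k} {j j' : β} (hf : f j ≠ f j')
    (hw : w (j, i₀) = w (j', i₀)) : eval w (crossFiberDiscr f i₀) = 0 := by
  rw [crossFiberDiscr, map_prod]
  exact prod_eq_zero (i := (j, j')) (by simpa using hf) (by simp [hw])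

lemma renamePoints_crossFiberDiscr {γ : Type*} (g : β → γ) :
    renamePoints g (crossFiberDiscr f i₀ : MvPolynomial (β × Fin d) k)
      = ∏ jj ∈ ({jj | f jj.1 ≠ f jj.2} : Finset (β × β)), (X (g jj.1, i₀) - X (g jj.2, i₀)) := by
  simp [crossFiberDiscr, renamePoints, map_prod]

lemma renamePoints_crossFiberDiscr_eq_zero {γ : Type*} {g : β → γ} {j j' : β} (hf : f j ≠ f j')
    (hg : g j = g j') : renamePoints g (crossFiberDiscr f i₀ : MvPolynomial (β × Fin d) k) = 0 := by
  rw [renamePoints_crossFiberDiscr]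
  exact prod_eq_zero (i := (j, j')) (by simpa using hf) (by simp [hg])

lemma renamePoints_crossFiberDiscr_ne_zero [IsDomain k] {γ : Type*} {g : β → γ}
    (hg : ∀ j j', f j ≠ f j' → g j ≠ g j') :
    renamePoints g (crossFiberDiscr f i₀ : MvPolynomial (β × Fin d) k) ≠ 0 := by
  rw [renamePoints_crossFiberDiscr, prod_ne_zero_iff]
  intro jj hjj
  rw [sub_ne_zero, Ne, X_inj, Prod.mk.injEq, not_and]
  exact fun h => absurd h (hg _ _ (by simpa using hjj))

lemma renamePoints_smul_crossFiberDiscr {σ : Equiv.Perm β} {θ : ι → ι} (hθ : θ.Injective)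
    (h : ∀ j, f (σ j) = θ (f j)) :
    renamePoints f (σ • crossFiberDiscr f i₀ : MvPolynomial (β × Fin d) k)
      = renamePoints f (crossFiberDiscr f i₀) := by
  rw [perm_smul_eq_renamePoints, renamePoints_renamePoints, renamePoints_crossFiberDiscr,
    renamePoints_crossFiberDiscr]
  refine prod_equiv (σ.prodCongr σ) (fun jj => ?_) fun jj _ => rfl
  simp [h, hθ.ne_iff]

lemma renamePoints_smul_crossFiberDiscr_eq_zero {σ : Equiv.Perm β} {j j' : β}
    (hσ : f (σ j) = f (σ j')) (hf : f j ≠ f j') :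
    renamePoints f (σ • crossFiberDiscr f i₀ : MvPolynomial (β × Fin d) k) = 0 := by
  rw [perm_smul_eq_renamePoints, renamePoints_renamePoints]
  exact renamePoints_crossFiberDiscr_eq_zero (g := f ∘ σ) hf hσ

end CrossFiberDiscr

section Pullback

variable {k : Type*} [CommRing k] {d : ℕ} {β ι : Type*}

lemma eq_zero_of_eval_eq_zero_of_injective [IsDomain k] [Infinite k] [Fintype ι] [DecidableEq ι]
    {g : MvPolynomial (ι × Fin d) k} (i₀ : Fin d)
    (h : ∀ w : ι × Fin d → k, (fun p => w (p, i₀)).Injective → eval w g = 0) : g = 0 := by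
  have hΔ : crossFiberDiscr id i₀ ≠ (0 : MvPolynomial (ι × Fin d) k) := by
    simpa only [renamePoints_id] using renamePoints_crossFiberDiscr_ne_zero (g := id) fun _ _ => id
  refine (mul_eq_zero.mp (MvPolynomial.funext fun w => ?_)).resolve_right hΔ
  rw [map_mul, map_zero]
  by_cases hw : (fun p => w (p, i₀)).Injective
  · rw [h w hw, zero_mul]
  · obtain ⟨p, q, hpq, hne⟩ : ∃ p q, w (p, i₀) = w (q, i₀) ∧ p ≠ q := by
      simpa [Function.Injective] using hw
    rw [eval_crossFiberDiscr_eq_zero hne hpq, mul_zero]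

lemma renamePoints_eq_zero_iff [IsDomain k] [Infinite k] [Fintype ι] [DecidableEq ι] [NeZero d]
    (e : β → ι) (f : MvPolynomial (β × Fin d) k) :
    renamePoints e f = 0 ↔
      ∀ z : ι → Fin d → k, z.Injective → eval (fun q : β × Fin d => z (e q.1) q.2) f = 0 := by
  have heval : ∀ w : ι × Fin d → k, eval w (renamePoints e f) = eval (fun q => w (e q.1, q.2)) f :=
    fun w => eval_rename _ _ _
  refine ⟨fun h z _ => by rw [← heval (fun q => z q.1 q.2), h, map_zero], fun h => ?_⟩
  refine eq_zero_of_eval_eq_zero_of_injective 0 fun w hw => ?_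
  rw [heval]
  exact h (fun p l => w (p, l)) fun p q hpq => hw (congrFun hpq 0)

end Pullback

section Duplication

variable {k : Type*} [CommRing k] {n d : ℕ} {ι : Type*} {e : Fin n → ι}

lemma isIntegral_map_renamePoints (he : e.Surjective) (x : MvPolynomial (ι × Fin d) k) :
    IsIntegral ((chowInvariants k n d).map (renamePoints e)) x := by
  obtain ⟨r, hr⟩ := he.hasRightInverse
  have hx : renamePoints e (renamePoints r x) = x := by
    rw [renamePoints_renamePoints, hr.comp_eq_id, renamePoints_id]
  rw [← hx]
  exact (Algebra.IsIntegral.isIntegral (R := chowInvariants k n d) _).map_of_comp_eq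
    ((renamePoints e).subalgebraMap _).toRingHom (renamePoints e).toRingHom rfl

variable [DecidableEq ι] {m : ι → ℕ}

lemma smul_renamePoints_of_mem_chowInvariants (he : ∀ p, #{j | e j = p} = m p)
    {f : MvPolynomial (Fin n × Fin d) k} (hf : f ∈ chowInvariants k n d) {θ : Equiv.Perm ι}
    (hθ : ∀ p, m (θ p) = m p) : θ • renamePoints e f = renamePoints e f := by
  obtain ⟨π, hπ⟩ := exists_perm_lift he θ hθ
  rw [← renamePoints_smul_of_comp_eq hπ, mem_chowInvariants_iff.mp hf π]

variable [Fintype ι]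

lemma renamePoints_smul_mul_crossFiberDiscr (he : ∀ p, #{j | e j = p} = m p) (hm : ∀ p, 0 < m p)
    {x : MvPolynomial (ι × Fin d) k} (hx : ∀ θ : Equiv.Perm ι, (∀ p, m (θ p) = m p) → θ • x = x)
    {r : ι → Fin n} (hr : ∀ p, e (r p) = p) (i₀ : Fin d) (σ : Equiv.Perm (Fin n)) :
    renamePoints e (σ • (renamePoints r x * crossFiberDiscr e i₀))
      = x * renamePoints e (σ • crossFiberDiscr e i₀) := by
  rw [smul_mul', map_mul]
  by_cases hσ : ∀ j j', e (σ j) = e (σ j') → e j = e j'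
  · obtain ⟨θ, hθm, hθ⟩ := exists_perm_descend he hm σ hσ
    rw [renamePoints_smul_of_comp_eq hθ, renamePoints_renamePoints, show e ∘ r = id from funext hr,
      renamePoints_id, hx θ hθm]
  · push Not at hσ
    obtain ⟨j, j', hσjj, hjj⟩ := hσ
    rw [renamePoints_smul_crossFiberDiscr_eq_zero hσjj hjj, mul_zero, mul_zero]

lemma renamePoints_sum_smul_crossFiberDiscr_ne_zero [IsDomain k] [CharZero k]
    (he : ∀ p, #{j | e j = p} = m p) (hm : ∀ p, 0 < m p) (i₀ : Fin d) :
    renamePoints e (∑ σ : Equiv.Perm (Fin n),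
      σ • (crossFiberDiscr e i₀ : MvPolynomial (Fin n × Fin d) k)) ≠ 0 := by
  classical
  have hterm : ∀ σ : Equiv.Perm (Fin n),
      renamePoints e (σ • (crossFiberDiscr e i₀ : MvPolynomial (Fin n × Fin d) k)) =
        if ∀ j j', e (σ j) = e (σ j') → e j = e j' then renamePoints e (crossFiberDiscr e i₀)
        else 0 := by
    intro σ
    split_ifs with hσ
    · obtain ⟨θ, -, hθ⟩ := exists_perm_descend he hm σ hσ
      exact renamePoints_smul_crossFiberDiscr θ.injective hθ
    · push Not at hσ
      obtain ⟨j, j', hσjj, hjj⟩ := hσ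
      exact renamePoints_smul_crossFiberDiscr_eq_zero hσjj hjj
  rw [map_sum, sum_congr rfl fun σ _ => hterm σ, ← sum_filter, sum_const]
  exact smul_ne_zero (card_pos.mpr ⟨1, by simp⟩).ne'
    (renamePoints_crossFiberDiscr_ne_zero fun _ _ => id)

lemma exists_mul_eq_of_forall_smul_eq [IsDomain k] [CharZero k] [NeZero d]
    (he : ∀ p, #{j | e j = p} = m p) (hm : ∀ p, 0 < m p)
    {x : MvPolynomial (ι × Fin d) k} (hx : ∀ θ : Equiv.Perm ι, (∀ p, m (θ p) = m p) → θ • x = x) :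
    ∃ y z, y ∈ (chowInvariants k n d).map (renamePoints e) ∧
      z ∈ (chowInvariants k n d).map (renamePoints e) ∧ z ≠ 0 ∧ z * x = y := by
  obtain ⟨r, hr⟩ := (surjective_of_card_fiber_pos he hm).hasRightInverse
  refine ⟨_, _, ⟨_, sum_smul_mem_chowInvariants (renamePoints r x * crossFiberDiscr e 0), rfl⟩,
    ⟨_, sum_smul_mem_chowInvariants (crossFiberDiscr e 0), rfl⟩,
    renamePoints_sum_smul_crossFiberDiscr_ne_zero he hm 0, ?_⟩
  simp only [RingHom.coe_coe, map_sum, sum_mul]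
  exact sum_congr rfl fun σ _ => by rw [renamePoints_smul_mul_crossFiberDiscr he hm hx hr, mul_comm]

end Duplication

lemma Subalgebra.isIntegrallyClosed_of_mul_mem {R S : Type*} [CommRing R] [CommRing S]
    [IsDomain S] [IsIntegrallyClosed S] [Algebra R S] (A : Subalgebra R S)
    (hA : ∀ b y : S, b ∈ A → b ≠ 0 → b * y ∈ A → y ∈ A) : IsIntegrallyClosed A := by
  have hinj : Function.Injective ((algebraMap S (FractionRing S)).comp A.val.toRingHom) :=
    (IsFractionRing.injective S _).comp Subtype.val_injective
  set φ : FractionRing A →+* FractionRing S := IsFractionRing.lift hinj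
  have hφ : ∀ a : A, φ (algebraMap A _ a) = algebraMap S (FractionRing S) a :=
    IsFractionRing.lift_algebraMap hinj
  refine (isIntegrallyClosed_iff (FractionRing A)).mpr fun {x} hx => ?_
  obtain ⟨y, hy⟩ := IsIntegrallyClosed.isIntegral_iff.mp
    (hx.map_of_comp_eq A.val.toRingHom φ (RingHom.ext fun a => (hφ a).symm))
  obtain ⟨a, b, hb, rfl⟩ := IsFractionRing.div_surjective (A := A) x
  have hb0 : (b : S) ≠ 0 := fun h => nonZeroDivisors.coe_ne_zero ⟨b, hb⟩ (Subtype.ext h)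
  have hS := IsFractionRing.injective S (FractionRing S)
  have hby : (b : S) * y = a := hS <| by
    rw [map_mul, hy, map_div₀, hφ, hφ, mul_div_cancel₀ _ ((map_ne_zero_iff _ hS).mpr hb0)]
  have hyA : y ∈ A := hA b y b.2 hb0 (hby ▸ a.2)
  exact ⟨⟨y, hyA⟩, φ.injective (by rw [hφ, hy])⟩

section BlockChowInvariants

variable {k : Type*} {s : ℕ} {α : Fin s → ℕ} {d : ℕ}

lemma mem_blockChowInvariants_iff [CommRing k]
    {x : MvPolynomial ((Σ i : Fin s, Fin (α i)) × Fin d) k} :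
    x ∈ blockChowInvariants k s α d ↔
      ∀ θ : Equiv.Perm (Σ i : Fin s, Fin (α i)), (∀ p, (θ p).1 = p.1) → θ • x = x :=
  Iff.rfl

lemma blockChowInvariants_isIntegrallyClosed [Field k] :
    IsIntegrallyClosed (blockChowInvariants k s α d) :=
  Subalgebra.isIntegrallyClosed_of_mul_mem _ fun b y hb hb0 hby θ hθ => mul_left_cancel₀ hb0 <| by
    simpa only [map_mul, hb θ hθ] using hby θ hθ

end BlockChowInvariants

theorem tau_mu_is_normalization_of_stratum_closure_general
    (k : Type u) [Field k] [CharZero k]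
    (s n : ℕ) (α : Fin s → ℕ)
    (e : Fin n → Σ i : Fin s, Fin (α i))
    (he : ∀ p : Σ i : Fin s, Fin (α i),
      (Finset.univ.filter fun j : Fin n => e j = p).card = p.1.1 + 1) :
    letI τ : MvPolynomial (Fin n × Fin 2) k →ₐ[k]
        MvPolynomial ((Σ i : Fin s, Fin (α i)) × Fin 2) k :=
      rename (fun q => (e q.1, q.2))
    letI R₀ : Subalgebra k (MvPolynomial ((Σ i : Fin s, Fin (α i)) × Fin 2) k) :=
      Subalgebra.map τ (chowInvariants k n 2)
    -- (1) the image of `τ_μ*` lands in the invariants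
    R₀ ≤ blockChowInvariants k s α 2 ∧
    -- (2) `Spec R₀ ⊆ Chowⁿ(𝔸²)` is the closure of the stratum `Chowⁿ_μ(𝔸²)`
    (∀ f ∈ chowInvariants k n 2, (τ f = 0 ↔
      ∀ z : (Σ i : Fin s, Fin (α i)) → Fin 2 → k, Function.Injective z →
        MvPolynomial.eval (fun q : Fin n × Fin 2 => z (e q.1) q.2) f = 0)) ∧
    -- (3) `A_α` is integral over `R₀`
    (∀ x ∈ blockChowInvariants k s α 2, IsIntegral ↥R₀ x) ∧
    -- (4) `τ_μ` is birational onto its image: `Frac R₀ = Frac A_α`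
    (∀ x ∈ blockChowInvariants k s α 2, ∃ y z_, y ∈ R₀ ∧ z_ ∈ R₀ ∧ z_ ≠ 0 ∧
      z_ * x = y) ∧
    -- (5) `A_α` is normal
    IsIntegrallyClosed ↥(blockChowInvariants k s α 2) := by
  have hm : ∀ p : Σ i : Fin s, Fin (α i), 0 < p.1.1 + 1 := fun _ => Nat.succ_pos _
  refine ⟨?_, fun f _ => renamePoints_eq_zero_iff e f,
    fun x _ => isIntegral_map_renamePoints (surjective_of_card_fiber_pos he hm) x,
    fun x hx => exists_mul_eq_of_forall_smul_eq he hm fun θ hθ =>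
      mem_blockChowInvariants_iff.mp hx θ fun p => Fin.ext (Nat.succ_injective (hθ p)),
    blockChowInvariants_isIntegrallyClosed⟩
  rintro _ ⟨f, hf, rfl⟩
  exact mem_blockChowInvariants_iff.mpr fun θ hθ =>
    smul_renamePoints_of_mem_chowInvariants he hf fun p => by rw [hθ p]

/-- `τ_μ` is the normalization of the closure of the stratum
`Chowⁿ_μ(𝔸²)`. -/
theorem tau_mu_is_normalization_of_stratum_closure
    (k : Type u) [Field k] [IsAlgClosed k] [CharZero k]
    (s n : ℕ) (α : Fin s → ℕ) (hn : ∑ i : Fin s, (i.1 + 1) * α i = n)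
    (e : Fin n → Σ i : Fin s, Fin (α i))
    (he : ∀ p : Σ i : Fin s, Fin (α i),
      (Finset.univ.filter fun j : Fin n => e j = p).card = p.1.1 + 1) :
    letI τ : MvPolynomial (Fin n × Fin 2) k →ₐ[k]
        MvPolynomial ((Σ i : Fin s, Fin (α i)) × Fin 2) k :=
      rename (fun q => (e q.1, q.2))
    letI R₀ : Subalgebra k (MvPolynomial ((Σ i : Fin s, Fin (α i)) × Fin 2) k) :=
      Subalgebra.map τ (chowInvariants k n 2)
    -- (1) the image of `τ_μ*` lands in the invariants
    R₀ ≤ blockChowInvariants k s α 2 ∧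
    -- (2) `Spec R₀ ⊆ Chowⁿ(𝔸²)` is the closure of the stratum `Chowⁿ_μ(𝔸²)`
    (∀ f ∈ chowInvariants k n 2, (τ f = 0 ↔
      ∀ z : (Σ i : Fin s, Fin (α i)) → Fin 2 → k, Function.Injective z →
        MvPolynomial.eval (fun q : Fin n × Fin 2 => z (e q.1) q.2) f = 0)) ∧
    -- (3) `A_α` is integral over `R₀`
    (∀ x ∈ blockChowInvariants k s α 2, IsIntegral ↥R₀ x) ∧
    -- (4) `τ_μ` is birational onto its image: `Frac R₀ = Frac A_α`
    (∀ x ∈ blockChowInvariants k s α 2, ∃ y z_, y ∈ R₀ ∧ z_ ∈ R₀ ∧ z_ ≠ 0 ∧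
      z_ * x = y) ∧
    -- (5) `A_α` is normal
    IsIntegrallyClosed ↥(blockChowInvariants k s α 2) :=
  tau_mu_is_normalization_of_stratum_closure_general k s n α e he
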